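/- arXiv:1806.07931 — 2 statements merged into one kernel-verified Lean document; each statement's English description precedes it below -/
import Mathlib

section
/- Let φ : I → R be a lower semicontinuous pseudoconvex function (with respect to the lower Dini derivative) on an interval I ⊆ R, and let Î be the set of global minimizers of φ over I. Then Î is a convex set (an interval, possibly empty or a single point). -/
open Filter Set

/-- Lower Dini directional derivative of a function of one real variable. -/
noncomputable def dini (φ : ℝ → ℝ) (s u : ℝ) : ℝ :=
  liminf (fun h : ℝ => (φ (s + h * u) - φ s) / h) (nhdsWithin 0 (Ioi 0))

/-- Pseudoconvexity w.r.t. the lower Dini derivative, one variable. -/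
def PseudoconvexOn (φ : ℝ → ℝ) (I : Set ℝ) : Prop :=
  ∀ s ∈ I, ∀ t ∈ I, φ t < φ s → dini φ s (t - s) < 0

/-- A direction `u` is admissible at `s` relative to `I`. -/
def Admissible (I : Set ℝ) (s u : ℝ) : Prop :=
  ∃ δ > 0, ∀ h ∈ Ioo (0:ℝ) δ, s + h * u ∈ I

/-- `s` is a stationary point of `φ` relative to `I`. -/
def Stationary (φ : ℝ → ℝ) (I : Set ℝ) (s : ℝ) : Prop :=
  ∀ u : ℝ, Admissible I s u → 0 ≤ dini φ s u

/-- The set of global minimizers of `φ` over `I`. -/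
def ArgminSet (φ : ℝ → ℝ) (I : Set ℝ) : Set ℝ := {t ∈ I | ∀ s ∈ I, φ t ≤ φ s}

/-!
Pseudoconvexity plus lower semicontinuity makes `φ` quasiconvex: if `φ x > max (φ a) (φ b)`
for some `x` between `a` and `b`, then by lower semicontinuity `φ` exceeds that maximum on a
compact interval `[c, d]` around `x`, and a minimizer `t` of `φ` on `[c, d]` is a point with
`φ t > φ a` and `φ t > φ b` at which one of the two directions, towards `a` or towards `b`,
points into `[c, d]`. Along that direction pseudoconvexity produces points arbitrarily close
to `t` with smaller values, which contradicts minimality. The set of minimizers is a sublevel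
set of the quasiconvex function `φ`, hence convex.
-/

open scoped Topology

lemma frequently_lt_of_dini_neg {φ : ℝ → ℝ} {s u : ℝ} (hneg : dini φ s u < 0) :
    ∃ᶠ h in 𝓝[>] 0, φ (s + h * u) < φ s := by
  -- if the difference quotients are not cobounded, `liminf` takes the junk value `0`
  have hcob : IsCoboundedUnder (· ≥ ·) (𝓝[>] 0) fun h : ℝ => (φ (s + h * u) - φ s) / h := by
    by_contra hcob
    exact hneg.ne (Real.liminf_of_not_isCoboundedUnder hcob)
  refine ((frequently_lt_of_liminf_lt hcob hneg).and_eventually self_mem_nhdsWithin).mono ?_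
  rintro h ⟨hquot, hpos : 0 < h⟩
  linarith [(div_lt_iff₀ hpos).1 hquot]

lemma tendsto_add_mul_nhdsGE {t u : ℝ} (hu : 0 ≤ u) :
    Tendsto (fun h => t + h * u) (𝓝[>] 0) (𝓝[≥] t) := by
  refine tendsto_nhdsWithin_iff.2 ⟨?_, ?_⟩
  · exact (Continuous.tendsto' (by fun_prop) 0 t (by simp)).mono_left nhdsWithin_le_nhds
  · filter_upwards [self_mem_nhdsWithin] with h (hh : 0 < h)
    exact le_add_of_nonneg_right (mul_nonneg hh.le hu)

lemma tendsto_add_mul_nhdsLE {t u : ℝ} (hu : u ≤ 0) :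
    Tendsto (fun h => t + h * u) (𝓝[>] 0) (𝓝[≤] t) := by
  refine tendsto_nhdsWithin_iff.2 ⟨?_, ?_⟩
  · exact (Continuous.tendsto' (by fun_prop) 0 t (by simp)).mono_left nhdsWithin_le_nhds
  · filter_upwards [self_mem_nhdsWithin] with h (hh : 0 < h)
    exact add_le_of_nonpos_right (mul_nonpos_of_nonneg_of_nonpos hh.le hu)

namespace PseudoconvexOn

variable {φ : ℝ → ℝ} {I : Set ℝ} {a b c d t x : ℝ}

lemma le_of_isMinFilter (hpc : PseudoconvexOn φ I) (ht : t ∈ I) (hb : b ∈ I) {l : Filter ℝ}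
    (hmin : IsMinFilter φ l t) (hl : Tendsto (fun h => t + h * (b - t)) (𝓝[>] 0) l) :
    φ t ≤ φ b := by
  by_contra! hlt
  have hdescent := frequently_lt_of_dini_neg (hpc t ht b hb hlt)
  exact hdescent ((hl.eventually hmin).mono fun _ => not_lt.2)

lemma le_max_of_isMinOn_Icc (hpc : PseudoconvexOn φ I) (ha : a ∈ I) (hb : b ∈ I) (ht : t ∈ I)
    (hac : a < c) (hcd : c < d) (hdb : d < b) (htK : t ∈ Icc c d)
    (hmin : IsMinOn φ (Icc c d) t) :
    φ t ≤ max (φ a) (φ b) := by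
  rcases htK.2.lt_or_eq with htd | rfl
  · exact le_max_of_le_right <| hpc.le_of_isMinFilter ht hb
      (hmin.filter_mono (le_principal_iff.2 (Icc_mem_nhdsGE_of_mem ⟨htK.1, htd⟩)))
      (tendsto_add_mul_nhdsGE (by linarith))
  · exact le_max_of_le_left <| hpc.le_of_isMinFilter ht ha
      (hmin.filter_mono (le_principal_iff.2 (Icc_mem_nhdsLE hcd)))
      (tendsto_add_mul_nhdsLE (by linarith))

lemma le_max_of_mem_Icc (hpc : PseudoconvexOn φ I) (hI : I.OrdConnected)
    (hlsc : LowerSemicontinuousOn φ I) (ha : a ∈ I) (hb : b ∈ I) (hx : x ∈ Icc a b) :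
    φ x ≤ max (φ a) (φ b) := by
  by_contra! hlt
  have hax : a < x := hx.1.lt_of_ne (by rintro rfl; exact (le_max_left _ _).not_gt hlt)
  have hxb : x < b := hx.2.lt_of_ne (by rintro rfl; exact (le_max_right _ _).not_gt hlt)
  have hI_nhds : I ∈ 𝓝 x := mem_of_superset (Icc_mem_nhds hax hxb) (hI.out ha hb)
  have hgt : ∀ᶠ y in 𝓝 x, max (φ a) (φ b) < φ y :=
    nhdsWithin_eq_nhds.2 hI_nhds ▸ hlsc x (hI.out ha hb hx) _ hlt
  obtain ⟨ε, hε, hball⟩ :=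
    Metric.nhds_basis_closedBall.mem_iff.1 (hgt.and (Ioo_mem_nhds hax hxb))
  rw [Real.closedBall_eq_Icc] at hball
  have hKI : Icc (x - ε) (x + ε) ⊆ I := fun _ hy =>
    hI.out ha hb (Ioo_subset_Icc_self (hball hy).2)
  obtain ⟨t, htK, htmin⟩ := (hlsc.mono hKI).exists_isMinOn (nonempty_Icc.2 (by linarith))
    isCompact_Icc
  exact (hball htK).1.not_ge <| hpc.le_max_of_isMinOn_Icc ha hb (hKI htK)
    (hball ⟨le_rfl, by linarith⟩).2.1 (by linarith) (hball ⟨by linarith, le_rfl⟩).2.2 htK htmin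

lemma quasiconvexOn (hpc : PseudoconvexOn φ I) (hI : I.OrdConnected)
    (hlsc : LowerSemicontinuousOn φ I) : QuasiconvexOn ℝ I φ := fun r => by
  refine convex_iff_ordConnected.2 ⟨fun a ha b hb x hx => ⟨hI.out ha.1 hb.1 hx, ?_⟩⟩
  exact (hpc.le_max_of_mem_Icc hI hlsc ha.1 hb.1 hx).trans (max_le ha.2 hb.2)

end PseudoconvexOn

lemma argminSet_eq_sep_le {φ : ℝ → ℝ} {I : Set ℝ} {t : ℝ} (ht : t ∈ ArgminSet φ I) :
    ArgminSet φ I = {x ∈ I | φ x ≤ φ t} :=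
  Set.ext fun _ => ⟨fun hx => ⟨hx.1, hx.2 t ht.1⟩,
    fun hx => ⟨hx.1, fun s hs => hx.2.trans (ht.2 s hs)⟩⟩

theorem stmt3 (I : Set ℝ) (hI : I.OrdConnected) (φ : ℝ → ℝ)
    (hlsc : LowerSemicontinuousOn φ I) (hpc : PseudoconvexOn φ I) :
    Convex ℝ (ArgminSet φ I) := by
  rcases (ArgminSet φ I).eq_empty_or_nonempty with hempty | ⟨t, ht⟩
  · exact hempty ▸ convex_empty
  · exact argminSet_eq_sep_le ht ▸ hpc.quasiconvexOn hI hlsc (φ t)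
end

section
/- Let X ⊆ R^n be a convex set and f : X → R a radially lower semicontinuous function. Then f is pseudoconvex with respect to the lower Dini derivative if and only if f is semistrictly quasiconvex and, for any x, y ∈ X with f(y) < f(x), the point t = 0 is not a stationary point of the restriction φ(t) = f(x + t(y-x)) on X(x,y). -/
/-!
Everything happens on segments `r ↦ f (x + r • (y - x))`. Pseudoconvexity means that `f` strictly
decreases, at arbitrarily small steps, from any point towards any point of lower value. A minimiser
of `f` on a subsegment of a region where `f` exceeds its values at two points (it exists by lower
semicontinuity) would admit such a decrease, so `f` is quasiconvex; a point where quasiconvexity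
holds with equality sits between two points of lower value reached by descent, which gives
semistrict quasiconvexity. Non-stationarity at `0` is the Dini inequality in direction `1`.

Conversely, take an admissible direction `u` with negative Dini derivative at `0`. If `u < 0`, then
`x` lies strictly between `y` and a point of lower value, contradicting quasiconvexity (which
semistrict quasiconvexity implies under lower semicontinuity); `u = 0` is impossible; and for
`u > 0` the Dini derivative scales positively homogeneously to the direction `y - x`.
-/

open Filter Set

/-- Lower Dini directional derivative of `f : ℝⁿ → ℝ` at `x` in direction `u`. -/
noncomputable def diniV {n : ℕ} (f : (Fin n → ℝ) → ℝ) (x u : Fin n → ℝ) : ℝ :=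
  liminf (fun h : ℝ => (f (x + h • u) - f x) / h) (nhdsWithin 0 (Ioi 0))

/-- Pseudoconvexity of `f` on `X ⊆ ℝⁿ` w.r.t. the lower Dini derivative. -/
def PseudoconvexOnV {n : ℕ} (f : (Fin n → ℝ) → ℝ) (X : Set (Fin n → ℝ)) : Prop :=
  ∀ x ∈ X, ∀ y ∈ X, f y < f x → diniV f x (y - x) < 0

/-- A direction `u` is admissible at `x` relative to `X`. -/
def AdmissibleV {n : ℕ} (X : Set (Fin n → ℝ)) (x u : Fin n → ℝ) : Prop :=
  ∃ δ > 0, ∀ h ∈ Ioo (0:ℝ) δ, x + h • u ∈ X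

/-- `x` is a stationary point of `f` relative to `X`. -/
def StationaryV {n : ℕ} (f : (Fin n → ℝ) → ℝ) (X : Set (Fin n → ℝ)) (x : Fin n → ℝ) : Prop :=
  ∀ u : Fin n → ℝ, AdmissibleV X x u → 0 ≤ diniV f x u

/-- `f` is radially lower semicontinuous on `X`: lsc on every segment. -/
def RadiallyLSC {n : ℕ} (f : (Fin n → ℝ) → ℝ) (X : Set (Fin n → ℝ)) : Prop :=
  ∀ x ∈ X, ∀ y ∈ X,
    LowerSemicontinuousOn (fun t : ℝ => f (x + t • (y - x))) (Icc 0 1)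

/-- `f` is radially upper semicontinuous on `X`: usc on every segment. -/
def RadiallyUSC {n : ℕ} (f : (Fin n → ℝ) → ℝ) (X : Set (Fin n → ℝ)) : Prop :=
  ∀ x ∈ X, ∀ y ∈ X,
    UpperSemicontinuousOn (fun t : ℝ => f (x + t • (y - x))) (Icc 0 1)

/-- `f` is quasiconvex on `X`. -/
def QuasiconvexOnSeg {n : ℕ} (f : (Fin n → ℝ) → ℝ) (X : Set (Fin n → ℝ)) : Prop :=
  ∀ x ∈ X, ∀ y ∈ X, ∀ t ∈ Icc (0:ℝ) 1, f (x + t • (y - x)) ≤ max (f x) (f y)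

/-- `f` is semistrictly quasiconvex on `X`. -/
def SemistrictlyQuasiconvexOn {n : ℕ} (f : (Fin n → ℝ) → ℝ) (X : Set (Fin n → ℝ)) : Prop :=
  ∀ x ∈ X, ∀ y ∈ X, f y < f x → ∀ t ∈ Ioo (0:ℝ) 1, f (x + t • (y - x)) < f x


open Topology

lemma frequently_lt_of_liminf_lt_of_nonpos {ι : Type*} {l : Filter ι} {u : ι → ℝ} {b : ℝ}
    (hb : b ≤ 0) (h : liminf u l < b) : ∃ᶠ x in l, u x < b := by
  refine frequently_lt_of_liminf_lt ?_ h
  by_contra hunb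
  -- in `ℝ` an unbounded `sSup` is `0`, which is not `< b`
  rw [liminf_eq, Real.sSup_of_not_bddAbove (s := {a | ∀ᶠ n in l, a ≤ u n}) hunb] at h
  linarith

lemma liminf_const_mul_of_pos {ι : Type*} {l : Filter ι} (u : ι → ℝ) {c : ℝ} (hc : 0 < c) :
    liminf (fun x => c * u x) l = c * liminf u l := by
  simp only [liminf_eq]
  rw [← smul_eq_mul c, ← Real.sSup_smul_of_nonneg hc.le]
  congr 1
  ext b
  simp only [mem_smul_set_iff_inv_smul_mem₀ hc.ne', mem_ofPred_eq, smul_eq_mul,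
    inv_mul_le_iff₀ hc]

lemma map_const_mul_nhdsGT_zero {c : ℝ} (hc : 0 < c) : map (c * ·) (𝓝[>] 0) = 𝓝[>] 0 := by
  have hsurj : Function.Surjective (c * ·) := fun y => ⟨y / c, mul_div_cancel₀ y hc.ne'⟩
  simpa only [comap_mulLeft_nhdsGT_zero hc] using map_comap_of_surjective hsurj (𝓝[>] 0)

section Dini

variable {φ : ℝ → ℝ} {s u : ℝ}

lemma dini_mul_of_pos {c : ℝ} (hc : 0 < c) : dini φ s (c * u) = c * dini φ s u := by
  have hquot : (fun h : ℝ => (φ (s + h * (c * u)) - φ s) / h) =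
      (fun h : ℝ => c * ((φ (s + h * u) - φ s) / h)) ∘ (c * ·) := by
    funext h
    rw [Function.comp_apply, ← mul_assoc, mul_comm h c, ← mul_div_assoc,
      mul_div_mul_left _ _ hc.ne']
  rw [dini, hquot, liminf_comp, map_const_mul_nhdsGT_zero hc, liminf_const_mul_of_pos _ hc, dini]

lemma dini_zero_right : dini φ s 0 = 0 := by
  simp [dini]

lemma exists_lt_of_dini_neg (h : dini φ s u < 0) {ε : ℝ} (hε : 0 < ε) :
    ∃ h ∈ Ioo 0 ε, φ (s + h * u) < φ s := by
  have hfreq := frequently_lt_of_liminf_lt_of_nonpos le_rfl h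
  obtain ⟨h, hneg, hmem⟩ := (hfreq.and_eventually (Ioo_mem_nhdsGT hε)).exists
  exact ⟨h, hmem, by simpa [div_neg_iff, hmem.1, not_lt.2 hmem.1.le] using hneg⟩

end Dini

lemma add_smul_add_smul_sub {E : Type*} [AddCommGroup E] [Module ℝ E] (x v : E) (s t τ : ℝ) :
    x + s • v + τ • (x + t • v - (x + s • v)) = x + (s + τ * (t - s)) • v := by
  module

section Line

variable {n : ℕ} {f : (Fin n → ℝ) → ℝ} {X : Set (Fin n → ℝ)} {x y : Fin n → ℝ}

lemma diniV_add_smul (f : (Fin n → ℝ) → ℝ) (x v : Fin n → ℝ) (s t : ℝ) :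
    diniV f (x + s • v) (x + t • v - (x + s • v)) = dini (fun r => f (x + r • v)) s (t - s) := by
  unfold diniV dini
  congr with h
  congr 3
  module

lemma dini_zero_one_eq_diniV (f : (Fin n → ℝ) → ℝ) (x y : Fin n → ℝ) :
    dini (fun r => f (x + r • (y - x))) 0 1 = diniV f x (y - x) := by
  simpa using (diniV_add_smul f x (y - x) 0 1).symm

lemma PseudoconvexOnV.pseudoconvexOn_line (hpc : PseudoconvexOnV f X) (hX : Convex ℝ X)
    (hx : x ∈ X) (hy : y ∈ X) : PseudoconvexOn (fun r => f (x + r • (y - x))) (Icc 0 1) := by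
  intro s hs t ht hlt
  rw [← diniV_add_smul]
  exact hpc _ (hX.add_smul_sub_mem hx hy hs) _ (hX.add_smul_sub_mem hx hy ht) hlt

lemma SemistrictlyQuasiconvexOn.lt_on_line (hss : SemistrictlyQuasiconvexOn f X)
    (hX : Convex ℝ X) (hx : x ∈ X) (hy : y ∈ X) {s t τ : ℝ} (hs : s ∈ Icc 0 1)
    (ht : t ∈ Icc 0 1) (hlt : f (x + t • (y - x)) < f (x + s • (y - x))) (hτ : τ ∈ Ioo 0 1) :
    f (x + (s + τ * (t - s)) • (y - x)) < f (x + s • (y - x)) := by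
  rw [← add_smul_add_smul_sub]
  exact hss _ (hX.add_smul_sub_mem hx hy hs) _ (hX.add_smul_sub_mem hx hy ht) hlt τ hτ

end Line

section OneVariable

variable {φ : ℝ → ℝ} {I : Set ℝ} {p q s t r c : ℝ}

lemma LowerSemicontinuousOn.isClosed_inter_preimage_Iic {S : Set ℝ}
    (hφ : LowerSemicontinuousOn φ S) (hS : IsClosed S) (c : ℝ) : IsClosed (S ∩ φ ⁻¹' Iic c) := by
  obtain ⟨v, hv, heq⟩ := lowerSemicontinuousOn_iff_preimage_Iic.1 hφ c
  rw [heq]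
  exact hS.inter hv

lemma LowerSemicontinuousOn.exists_Ioo_lt (hφ : LowerSemicontinuousOn φ (Icc p q))
    (ht : t ∈ Icc p q) (hp : φ p ≤ c) (hq : φ q ≤ c) (hct : c < φ t) :
    ∃ a b, p ≤ a ∧ a < t ∧ t < b ∧ b ≤ q ∧ φ a ≤ c ∧ φ b ≤ c ∧ ∀ r ∈ Ioo a b, c < φ r := by
  set K₁ := Icc p t ∩ φ ⁻¹' Iic c
  set K₂ := Icc t q ∩ φ ⁻¹' Iic c
  have hK₁ : IsClosed K₁ :=
    (hφ.mono (Icc_subset_Icc_right ht.2)).isClosed_inter_preimage_Iic isClosed_Icc c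
  have hK₂ : IsClosed K₂ :=
    (hφ.mono (Icc_subset_Icc_left ht.1)).isClosed_inter_preimage_Iic isClosed_Icc c
  have hbdd₁ : BddAbove K₁ := ⟨t, fun r hr => hr.1.2⟩
  have hbdd₂ : BddBelow K₂ := ⟨t, fun r hr => hr.1.1⟩
  have ha := hK₁.csSup_mem ⟨p, ⟨le_rfl, ht.1⟩, hp⟩ hbdd₁
  have hb := hK₂.csInf_mem ⟨q, ⟨ht.2, le_rfl⟩, hq⟩ hbdd₂
  have hat : sSup K₁ < t := ha.1.2.lt_of_ne fun h => (h ▸ ha.2 : φ t ≤ c).not_gt hct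
  have htb : t < sInf K₂ := hb.1.1.lt_of_ne' fun h => (h ▸ hb.2 : φ t ≤ c).not_gt hct
  refine ⟨sSup K₁, sInf K₂, ha.1.1, hat, htb, hb.1.2, ha.2, hb.2, fun r hr => ?_⟩
  by_contra! hrc
  rcases le_total r t with hrt | htr
  · exact (le_csSup hbdd₁ ⟨⟨ha.1.1.trans hr.1.le, hrt⟩, hrc⟩).not_gt hr.1
  · exact (csInf_le hbdd₂ ⟨⟨htr, hr.2.le.trans hb.1.2⟩, hrc⟩).not_gt hr.2

lemma PseudoconvexOn.mono {J : Set ℝ} (hpc : PseudoconvexOn φ I) (hJ : J ⊆ I) :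
    PseudoconvexOn φ J :=
  fun s hs t ht hlt => hpc s (hJ hs) t (hJ ht) hlt

lemma PseudoconvexOn.exists_lt_toward (hpc : PseudoconvexOn φ I) (hs : s ∈ I) (ht : t ∈ I)
    (hlt : φ t < φ s) (hc : 0 < c) : ∃ h ∈ Ioo (0 : ℝ) 1, φ (s + h * (c * (t - s))) < φ s := by
  refine exists_lt_of_dini_neg ?_ one_pos
  rw [dini_mul_of_pos hc]
  exact mul_neg_of_pos_of_neg hc (hpc s hs t ht hlt)

lemma PseudoconvexOn.exists_lt_of_mem_Ioc (hpc : PseudoconvexOn φ I) (hs : s ∈ I) (ht : t ∈ I)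
    (hlt : φ t < φ s) (hr : r ∈ Ioc s t) : ∃ r' ∈ Ioo s r, φ r' < φ s := by
  have hts : 0 < t - s := sub_pos.2 (hr.1.trans_le hr.2)
  obtain ⟨h, hh, hφ⟩ := hpc.exists_lt_toward hs ht hlt (div_pos (sub_pos.2 hr.1) hts)
  rw [div_mul_cancel₀ _ hts.ne'] at hφ
  exact ⟨_, ⟨by nlinarith [hh.1, hr.1], by nlinarith [hh.2, hr.1]⟩, hφ⟩

lemma PseudoconvexOn.exists_lt_of_mem_Ico (hpc : PseudoconvexOn φ I) (hs : s ∈ I) (ht : t ∈ I)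
    (hlt : φ t < φ s) (hr : r ∈ Ico t s) : ∃ r' ∈ Ioo r s, φ r' < φ s := by
  have hst : 0 < s - t := sub_pos.2 (hr.1.trans_lt hr.2)
  obtain ⟨h, hh, hφ⟩ := hpc.exists_lt_toward hs ht hlt (div_pos (sub_pos.2 hr.2) hst)
  rw [show (s - r) / (s - t) * (t - s) = r - s by field_simp; ring] at hφ
  exact ⟨_, ⟨by nlinarith [hh.2, hr.2], by nlinarith [hh.1, hr.2]⟩, hφ⟩

lemma PseudoconvexOn.le_max (hpc : PseudoconvexOn φ (Icc p q))
    (hφ : LowerSemicontinuousOn φ (Icc p q)) (ht : t ∈ Icc p q) : φ t ≤ max (φ p) (φ q) := by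
  by_contra! hct
  obtain ⟨a, b, hpa, hat, htb, hbq, ha, hb, hgap⟩ :=
    hφ.exists_Ioo_lt ht (le_max_left _ _) (le_max_right _ _) hct
  obtain ⟨m, htm, hmb⟩ := exists_between htb
  have hsub : Icc t m ⊆ Icc p q := Icc_subset_Icc ht.1 (hmb.le.trans hbq)
  -- a minimiser of `φ` on `[t, m]` lies in the gap `(a, b)`, so `φ` decreases from it towards
  -- `a` and towards `b`; one of the two directions stays inside `[t, m]`
  obtain ⟨μ, hμ, hmin⟩ := (hφ.mono hsub).exists_isMinOn (nonempty_Icc.2 htm.le) isCompact_Icc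
  have hμφ : max (φ p) (φ q) < φ μ := hgap μ ⟨hat.trans_le hμ.1, by linarith [hμ.2]⟩
  have ha' : a ∈ Icc p q := ⟨hpa, by linarith [ht.2]⟩
  have hb' : b ∈ Icc p q := ⟨by linarith [ht.1], hbq⟩
  rcases hμ.1.eq_or_lt with rfl | htμ
  · obtain ⟨r, hr, hφr⟩ := hpc.exists_lt_of_mem_Ioc ht hb' (hb.trans_lt hμφ)
      (r := m) ⟨htm, hmb.le⟩
    exact (hmin ⟨hr.1.le, hr.2.le⟩).not_gt hφr
  · obtain ⟨r, hr, hφr⟩ := hpc.exists_lt_of_mem_Ico (hsub hμ) ha' (ha.trans_lt hμφ) ⟨hat.le, htμ⟩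
    exact (hmin ⟨hr.1.le, hr.2.le.trans hμ.2⟩).not_gt hφr

lemma PseudoconvexOn.lt_left_of_mem_Ioo (hpc : PseudoconvexOn φ (Icc p q))
    (hφ : LowerSemicontinuousOn φ (Icc p q)) (hqp : φ q < φ p) (ht : t ∈ Ioo p q) :
    φ t < φ p := by
  by_contra! hpt
  have hp : p ∈ Icc p q := left_mem_Icc.2 (ht.1.trans ht.2).le
  have hq : q ∈ Icc p q := right_mem_Icc.2 (ht.1.trans ht.2).le
  have htp : φ t = φ p :=
    le_antisymm ((hpc.le_max hφ (Ioo_subset_Icc_self ht)).trans_eq (max_eq_left hqp.le)) hpt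
  obtain ⟨p', hp', hφp'⟩ := hpc.exists_lt_of_mem_Ioc hp hq hqp ⟨ht.1, ht.2.le⟩
  obtain ⟨q', hq', hφq'⟩ := hpc.exists_lt_of_mem_Ioc (Ioo_subset_Icc_self ht) hq
    (hqp.trans_eq htp.symm) ⟨ht.2, le_rfl⟩
  have hsub : Icc p' q' ⊆ Icc p q := Icc_subset_Icc hp'.1.le hq'.2.le
  have := (hpc.mono hsub).le_max (hφ.mono hsub) ⟨hp'.2.le, hq'.1.le⟩
  exact this.not_gt (max_lt (hφp'.trans_eq htp.symm) hφq')

end OneVariable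

section Segment

variable {n : ℕ} {f : (Fin n → ℝ) → ℝ} {X : Set (Fin n → ℝ)} {x y : Fin n → ℝ}

lemma PseudoconvexOnV.semistrictlyQuasiconvexOn (hpc : PseudoconvexOnV f X) (hX : Convex ℝ X)
    (hlsc : RadiallyLSC f X) : SemistrictlyQuasiconvexOn f X := by
  intro x hx y hy hxy t ht
  simpa using (hpc.pseudoconvexOn_line hX hx hy).lt_left_of_mem_Ioo (hlsc x hx y hy)
    (by simpa using hxy) ht

lemma PseudoconvexOnV.not_stationary (hpc : PseudoconvexOnV f X) (hX : Convex ℝ X)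
    (hx : x ∈ X) (hy : y ∈ X) (hxy : f y < f x) :
    ¬ Stationary (fun t : ℝ => f (x + t • (y - x))) {t : ℝ | x + t • (y - x) ∈ X} 0 := by
  intro hstat
  have hadm : Admissible {t : ℝ | x + t • (y - x) ∈ X} 0 1 :=
    ⟨1, one_pos, fun h hh => by simpa using hX.add_smul_sub_mem hx hy (Ioo_subset_Icc_self hh)⟩
  have := hstat 1 hadm
  rw [dini_zero_one_eq_diniV] at this
  exact this.not_gt (hpc x hx y hy hxy)

lemma SemistrictlyQuasiconvexOn.quasiconvexOnSeg (hss : SemistrictlyQuasiconvexOn f X)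
    (hX : Convex ℝ X) (hlsc : RadiallyLSC f X) : QuasiconvexOnSeg f X := by
  intro x hx y hy t ht
  by_contra! hct
  obtain ⟨a, b, ha0, hat, htb, hb1, ha, hb, hgap⟩ :=
    (hlsc x hx y hy).exists_Ioo_lt ht (by simp) (by simp) hct
  -- for the midpoint `m` of `a` and `t`, semistrict quasiconvexity gives `φ m < φ t` (compare `t`
  -- with `a`) and `φ t < φ m` (compare `m` with `b`), where `φ r = f (x + r • (y - x))`
  set m := t + 1 / 2 * (a - t) with hm_def
  obtain ⟨ham, hmt⟩ : a < m ∧ m < t := ⟨by linarith, by linarith⟩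
  have hm' : m ∈ Icc (0 : ℝ) 1 := ⟨by linarith, by linarith [ht.2]⟩
  have hb' : b ∈ Icc (0 : ℝ) 1 := ⟨by linarith [ht.1], hb1⟩
  have hφmt : f (x + m • (y - x)) < f (x + t • (y - x)) :=
    hss.lt_on_line hX hx hy ht ⟨ha0, hat.le.trans ht.2⟩ (ha.trans_lt hct) (by norm_num)
  have htm := hss.lt_on_line hX hx hy hm' hb' (hb.trans_lt (hgap m ⟨ham, hmt.trans htb⟩))
    (τ := (t - m) / (b - m)) ⟨div_pos (by linarith) (by linarith), by
      rw [div_lt_one (by linarith)]; linarith⟩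
  rw [div_mul_cancel₀ _ (by linarith), add_sub_cancel] at htm
  exact htm.not_gt hφmt

lemma QuasiconvexOnSeg.le_max_of_neg (hqc : QuasiconvexOnSeg f X) (hy : y ∈ X) {s : ℝ}
    (hs : s < 0) (hw : x + s • (y - x) ∈ X) : f x ≤ max (f (x + s • (y - x))) (f y) := by
  have hτ : -s / (1 - s) ∈ Icc (0 : ℝ) 1 :=
    ⟨div_nonneg (by linarith) (by linarith), (div_le_one (by linarith)).2 (by linarith)⟩
  convert hqc _ hw y hy _ hτ using 2
  have hx : x + s • (y - x) + (-s / (1 - s)) • (y - (x + s • (y - x))) =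
      x + (s + -s / (1 - s) * (1 - s)) • (y - x) := by
    module
  rw [hx, div_mul_cancel₀ _ (by linarith)]
  simp

lemma QuasiconvexOnSeg.diniV_neg_of_not_stationary (hqc : QuasiconvexOnSeg f X) (hy : y ∈ X)
    (hxy : f y < f x)
    (hns : ¬ Stationary (fun t : ℝ => f (x + t • (y - x))) {t : ℝ | x + t • (y - x) ∈ X} 0) :
    diniV f x (y - x) < 0 := by
  obtain ⟨u, ⟨δ, hδ, hadm⟩, hu⟩ := not_forall₂.1 hns
  rw [not_le] at hu
  rcases lt_trichotomy u 0 with hu0 | rfl | hu0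
  · -- `x` would lie strictly between `y` and a point of lower value
    obtain ⟨h, hh, hlt⟩ := exists_lt_of_dini_neg hu hδ
    have hw := hadm h hh
    simp only [zero_add, zero_smul, add_zero, mem_ofPred_eq] at hlt hw
    have := hqc.le_max_of_neg hy (mul_neg_of_pos_of_neg hh.1 hu0) hw
    exact absurd this (max_lt hlt hxy).not_ge
  · rw [dini_zero_right] at hu
    exact absurd hu (lt_irrefl 0)
  · rw [← mul_one u, dini_mul_of_pos hu0, dini_zero_one_eq_diniV] at hu
    exact neg_of_mul_neg_right hu hu0.le

end Segment

theorem stmt13 {n : ℕ} (X : Set (Fin n → ℝ)) (hX : Convex ℝ X)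
    (f : (Fin n → ℝ) → ℝ) (hlsc : RadiallyLSC f X) :
    PseudoconvexOnV f X ↔
      (SemistrictlyQuasiconvexOn f X ∧
        ∀ x ∈ X, ∀ y ∈ X, f y < f x →
          ¬ Stationary (fun t : ℝ => f (x + t • (y - x)))
            {t : ℝ | x + t • (y - x) ∈ X} 0) := by
  refine ⟨fun hpc => ⟨hpc.semistrictlyQuasiconvexOn hX hlsc,
    fun x hx y hy hxy => hpc.not_stationary hX hx hy hxy⟩, ?_⟩
  rintro ⟨hss, hns⟩ x hx y hy hxy
  exact (hss.quasiconvexOnSeg hX hlsc).diniV_neg_of_not_stationary hy hxy (hns x hx y hy hxy)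
end
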